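/- Let G be a finite set of flat and linear ground Π^C-clauses, Σ_s and Σ_1 the extension function symbols occurring in G, C_s ⊆ C a set of constants occurring in G, and T := T0 ∪ K_s ∪ K_1 ∪ K_i a theory extension satisfying all hypotheses of the symbol-elimination theorem (T0 allows quantifier elimination; the extension is local; K_s, K_1, K_i are flat, linear, with every variable below an extension symbol, over the disjoint extension signatures Σ_s, Σ_1, Σ_i respectively). Let Γ be the T-general uniform interpolant of G w.r.t. Σ_s ∪ C̄_s (with C_s ⊆ C̄_s) obtained by Algorithm 1. If ψ is a ground Π_s^{C_s}-formula which is a (T0 ∪ K_s ∪ UIF_{Σ_1 ∪ Σ_i})-uniform interpolant of Γ w.r.t. C_s, then ψ is a T-general uniform interpolant of G w.r.t. Σ_s ∪ C_s. -/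

import Mathlib

/- Common framework: first-order signatures with designated sets of interpreted symbols,
uninterpreted (extension) function symbols and fresh constants, clauses, flatness/linearity,
instances, locality of theory extensions, (general) uniform interpolants, and a semantic
specification of the symbol-elimination Algorithm 1 of the paper. -/

open FirstOrder FirstOrder.Language

namespace PaperSE

variable {L : FirstOrder.Language.{0, 0}}

/-- A function symbol of `L` together with its arity. Constants are the arity-0 symbols. -/
abbrev Sym (L : FirstOrder.Language.{0, 0}) : Type := Σ n : ℕ, L.Functions n

/-- Ground terms (no variables; constants are `0`-ary function symbols of `L`). -/
abbrev GTerm (L : FirstOrder.Language.{0, 0}) : Type := L.Term Empty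

/-- A ground term viewed as a term with variables from `α`. -/
def GTerm.cast {α : Type} (t : GTerm L) : L.Term α := Term.relabel Empty.elim t

/-- The term `c()` for a constant symbol `c`. -/
def constT (c : L.Functions 0) : GTerm L := Term.func c (fun j => j.elim0)

/- ### Structures, with the interpretation passed explicitly -/

def FunM (M : Type) (S : L.Structure M) {n : ℕ} (f : L.Functions n) (x : Fin n → M) : M := by
  letI := S; exact Structure.funMap f x

def RelM (M : Type) (S : L.Structure M) {n : ℕ} (r : L.Relations n) (x : Fin n → M) : Prop := by
  letI := S; exact Structure.RelMap r x

def TVal (M : Type) (S : L.Structure M) {α : Type} (v : α → M) (t : L.Term α) : M := by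
  letI := S; exact t.realize v

/-- Value of a ground term. -/
def GVal (M : Type) (S : L.Structure M) (t : GTerm L) : M :=
  TVal M S (fun e : Empty => e.elim) t

def RealizeF (M : Type) (S : L.Structure M) {α : Type} (φ : L.Formula α) (v : α → M) : Prop := by
  letI := S; exact φ.Realize v

def RealizeSent (M : Type) (S : L.Structure M) (φ : L.Sentence) : Prop :=
  RealizeF M S φ (fun e : Empty => e.elim)

def ModelsT (M : Type) (S : L.Structure M) (T : L.Theory) : Prop :=
  ∀ φ ∈ T, RealizeSent M S φ

/- ### Symbols and ground terms occurring in terms and formulas -/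

/-- The set of subterms of a term. -/
def subterms {α : Type} : L.Term α → Set (L.Term α)
  | .var a => {Term.var a}
  | .func f ts => insert (Term.func f ts) (⋃ i, subterms (ts i))

/-- The function (and constant) symbols occurring in a term. -/
def termSyms {α : Type} : L.Term α → Set (Sym L)
  | .var _ => ∅
  | .func f ts => insert ⟨_, f⟩ (⋃ i, termSyms (ts i))

/-- The list of occurrences of variables in a term. -/
def varOccs {α : Type} : L.Term α → List α
  | .var a => [a]
  | .func _ ts => (List.finRange _).flatMap (fun i => varOccs (ts i))

/-- The list of occurrences of constant symbols in a ground term. -/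
def constOccs : GTerm L → List (L.Functions 0)
  | .var e => e.elim
  | .func (l := n) f ts =>
      if h : n = 0 then [h ▸ f]
      else (List.finRange n).flatMap (fun i => constOccs (ts i))

/-- Does the term start with a function symbol from `F`? -/
def rootIn (F : Set (Sym L)) {α : Type} : L.Term α → Prop
  | .var _ => False
  | .func f _ => (⟨_, f⟩ : Sym L) ∈ F

/-- The function (and constant) symbols occurring in a bounded formula. -/
def bfSyms {α : Type} : ∀ {n : ℕ}, L.BoundedFormula α n → Set (Sym L)
  | _, .falsum => ∅
  | _, .equal t u => termSyms t ∪ termSyms u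
  | _, .rel _ ts => ⋃ i, termSyms (ts i)
  | _, .imp f g => bfSyms f ∪ bfSyms g
  | _, .all f => bfSyms f

abbrev sentSyms (s : L.Sentence) : Set (Sym L) := bfSyms s

def theorySyms (T : L.Theory) : Set (Sym L) := ⋃ s ∈ T, sentSyms s

/-- The ground terms occurring in a bounded formula. -/
def bfGTerms {α : Type} : ∀ {n : ℕ}, L.BoundedFormula α n → Set (GTerm L)
  | _, .falsum => ∅
  | _, .equal t u => {g | GTerm.cast g ∈ subterms t ∨ GTerm.cast g ∈ subterms u}
  | _, .rel _ ts => {g | ∃ i, GTerm.cast g ∈ subterms (ts i)}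
  | _, .imp f g => bfGTerms f ∪ bfGTerms g
  | _, .all f => bfGTerms f

abbrev sentGTerms (s : L.Sentence) : Set (GTerm L) := bfGTerms s

/- ### Literals and clauses -/

/-- Literals over variables `α`. -/
inductive Lit (L : FirstOrder.Language.{0, 0}) (α : Type) : Type where
  | eq (t u : L.Term α)
  | neq (t u : L.Term α)
  | rel {n : ℕ} (R : L.Relations n) (ts : Fin n → L.Term α)
  | nrel {n : ℕ} (R : L.Relations n) (ts : Fin n → L.Term α)

namespace Lit

def terms {α : Type} : Lit L α → Set (L.Term α)
  | eq t u => {t, u}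
  | neq t u => {t, u}
  | rel _ ts => Set.range ts
  | nrel _ ts => Set.range ts

/-- An atom (positive literal). -/
def Positive {α : Type} : Lit L α → Prop
  | eq _ _ => True
  | rel _ _ => True
  | _ => False

def subst {α β : Type} (σ : α → L.Term β) : Lit L α → Lit L β
  | eq t u => eq (t.subst σ) (u.subst σ)
  | neq t u => neq (t.subst σ) (u.subst σ)
  | rel R ts => rel R (fun i => (ts i).subst σ)
  | nrel R ts => nrel R (fun i => (ts i).subst σ)

def Realize (M : Type) (S : L.Structure M) {α : Type} (v : α → M) : Lit L α → Prop
  | eq t u => TVal M S v t = TVal M S v u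
  | neq t u => TVal M S v t ≠ TVal M S v u
  | rel R ts => RelM M S R (fun i => TVal M S v (ts i))
  | nrel R ts => ¬ RelM M S R (fun i => TVal M S v (ts i))

def syms {α : Type} (l : Lit L α) : Set (Sym L) := ⋃ t ∈ l.terms, termSyms t

end Lit

/-- A (universally closed) clause: a disjunction of literals with variables `Fin nvars`,
viewed as universally quantified. -/
structure Clause (L : FirstOrder.Language.{0, 0}) : Type where
  nvars : ℕ
  lits : List (Lit L (Fin nvars))

/-- A ground clause: a disjunction of ground literals. -/
abbrev GClause (L : FirstOrder.Language.{0, 0}) : Type := List (Lit L Empty)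

def Clause.instantiate (C : Clause L) (σ : Fin C.nvars → GTerm L) : GClause L :=
  C.lits.map (Lit.subst σ)

def Clause.syms (C : Clause L) : Set (Sym L) := ⋃ l ∈ C.lits, Lit.syms l

def GClause.syms (C : GClause L) : Set (Sym L) := ⋃ l ∈ C, Lit.syms l

def GClause.gterms (C : GClause L) : Set (GTerm L) := ⋃ l ∈ C, ⋃ t ∈ Lit.terms l, subterms t

def ClausesSyms (K : Set (Clause L)) : Set (Sym L) := ⋃ C ∈ K, C.syms

def GSyms (G : Set (GClause L)) : Set (Sym L) := ⋃ C ∈ G, GClause.syms C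

def GTerms (G : Set (GClause L)) : Set (GTerm L) := ⋃ C ∈ G, GClause.gterms C

/- ### Satisfaction -/

def ClauseHolds (M : Type) (S : L.Structure M) (C : Clause L) : Prop :=
  ∀ v : Fin C.nvars → M, ∃ l ∈ C.lits, Lit.Realize M S v l

def GClauseHolds (M : Type) (S : L.Structure M) (C : GClause L) : Prop :=
  ∃ l ∈ C, Lit.Realize M S (fun e : Empty => e.elim) l

def ModelsK (M : Type) (S : L.Structure M) (K : Set (Clause L)) : Prop :=
  ∀ C ∈ K, ClauseHolds M S C

def ModelsG (M : Type) (S : L.Structure M) (G : Set (GClause L)) : Prop :=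
  ∀ C ∈ G, GClauseHolds M S C

/-- Satisfiability (in the joint signature) of base theory `T0`, clause set `K`
and ground clauses `G`. -/
def SatTKG (T0 : L.Theory) (K : Set (Clause L)) (G : Set (GClause L)) : Prop :=
  ∃ (M : Type) (_ : Nonempty M) (S : L.Structure M),
    ModelsT M S T0 ∧ ModelsK M S K ∧ ModelsG M S G

/-- `G ⊨_{T0 ∪ K} θ` for a sentence `θ`. -/
def EntailsC (T0 : L.Theory) (K : Set (Clause L)) (G : Set (GClause L)) (θ : L.Sentence) : Prop :=
  ∀ (M : Type) (S : L.Structure M), Nonempty M →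
    ModelsT M S T0 → ModelsK M S K → ModelsG M S G → RealizeSent M S θ

/-- `A ⊨_{T0 ∪ K} θ` for sentences `A`, `θ`. -/
def EntailsS (T0 : L.Theory) (K : Set (Clause L)) (A θ : L.Sentence) : Prop :=
  ∀ (M : Type) (S : L.Structure M), Nonempty M →
    ModelsT M S T0 → ModelsK M S K → RealizeSent M S A → RealizeSent M S θ

/- ### Extension ground terms and instances -/

/-- `est(K, G)`: the ground terms starting with a function symbol in `F`
occurring in `K` or in `G`. -/
def estKG (F : Set (Sym L)) (K : Set (Clause L)) (G : Set (GClause L)) : Set (GTerm L) :=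
  { t | rootIn F t ∧
      ((∃ C ∈ K, ∃ l ∈ C.lits, ∃ s ∈ Lit.terms l, GTerm.cast t ∈ subterms s) ∨
       (∃ C ∈ G, t ∈ GClause.gterms C)) }

/-- `K[Tt]`: the set of ground instances of clauses of `K` all of whose terms starting
with a function symbol in `F` belong to `Tt`. -/
def instancesIn (F : Set (Sym L)) (K : Set (Clause L)) (Tt : Set (GTerm L)) :
    Set (GClause L) :=
  { D | ∃ C ∈ K, ∃ σ : Fin C.nvars → GTerm L, D = C.instantiate σ ∧
      ∀ t ∈ GClause.gterms (C.instantiate σ), rootIn F t → t ∈ Tt }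

/- ### Locality -/

/-- Locality of the extension of the theory `T0` together with base clauses `K0`
by the clauses `K`, with extension symbols `F`. -/
def LocalExt2 (F : Set (Sym L)) (T0 : L.Theory) (K0 K : Set (Clause L)) : Prop :=
  ∀ G : Set (GClause L), G.Finite →
    ((¬ ∃ (M : Type) (_ : Nonempty M) (S : L.Structure M),
        ModelsT M S T0 ∧ ModelsK M S K0 ∧ ModelsK M S K ∧ ModelsG M S G) ↔
     (¬ ∃ (M : Type) (_ : Nonempty M) (S : L.Structure M),
        ModelsT M S T0 ∧ ModelsK M S K0 ∧
          ModelsG M S (instancesIn F K (estKG F K G) ∪ G)))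

/-- Locality of the theory extension `T0 ⊆ T0 ∪ K` with extension symbols `F`. -/
abbrev LocalExt (F : Set (Sym L)) (T0 : L.Theory) (K : Set (Clause L)) : Prop :=
  LocalExt2 F T0 ∅ K

/-- `Ψ`-locality of the theory extension `T0 ⊆ T0 ∪ K` with extension symbols `F`. -/
def PsiLocalExt (F : Set (Sym L)) (T0 : L.Theory) (K : Set (Clause L))
    (Ψ : Set (GTerm L) → Set (GTerm L)) : Prop :=
  ∀ G : Set (GClause L), G.Finite →
    (¬ SatTKG T0 K G ↔ ¬ SatTKG T0 ∅ (instancesIn F K (Ψ (estKG F K G)) ∪ G))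

/- ### Flatness and linearity -/

/-- All symbols occurring directly below a function symbol from `F` are variables. -/
def flatTerm (F : Set (Sym L)) {α : Type} : L.Term α → Prop
  | .var _ => True
  | .func f ts =>
      ((⟨_, f⟩ : Sym L) ∈ F → ∀ i, ∃ a, ts i = Term.var a) ∧ ∀ i, flatTerm F (ts i)

/-- All symbols occurring directly below a function symbol from `F` are constants. -/
def flatGTerm (F : Set (Sym L)) : GTerm L → Prop
  | .var e => e.elim
  | .func f ts =>
      ((⟨_, f⟩ : Sym L) ∈ F → ∀ i, ∃ c : L.Functions 0, ts i = constT c) ∧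
        ∀ i, flatGTerm F (ts i)

def Clause.extTerms (F : Set (Sym L)) (C : Clause L) : Set (L.Term (Fin C.nvars)) :=
  { t | rootIn F t ∧ ∃ l ∈ C.lits, ∃ s ∈ Lit.terms l, t ∈ subterms s }

def Clause.Flat (F : Set (Sym L)) (C : Clause L) : Prop :=
  ∀ l ∈ C.lits, ∀ t ∈ Lit.terms l, flatTerm F t

def Clause.Linear (F : Set (Sym L)) (C : Clause L) : Prop :=
  (∀ t ∈ C.extTerms F, ∀ u ∈ C.extTerms F,
      (∃ x, x ∈ varOccs t ∧ x ∈ varOccs u) → t = u) ∧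
  (∀ t ∈ C.extTerms F, (varOccs t).Nodup)

/-- Every variable occurring in the clause occurs below a function symbol from `F`. -/
def Clause.VarsBelowExt (F : Set (Sym L)) (C : Clause L) : Prop :=
  ∀ x : Fin C.nvars, (∃ l ∈ C.lits, ∃ s ∈ Lit.terms l, x ∈ varOccs s) →
    ∃ t ∈ C.extTerms F, x ∈ varOccs t

def GClause.extTerms (F : Set (Sym L)) (C : GClause L) : Set (GTerm L) :=
  { t | rootIn F t ∧ t ∈ GClause.gterms C }

def GClause.Flat (F : Set (Sym L)) (C : GClause L) : Prop :=
  ∀ l ∈ C, ∀ t ∈ Lit.terms l, flatGTerm F t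

def GClause.Linear (F : Set (Sym L)) (C : GClause L) : Prop :=
  (∀ t ∈ GClause.extTerms F C, ∀ u ∈ GClause.extTerms F C,
      (∃ c, c ∈ constOccs t ∧ c ∈ constOccs u) → t = u) ∧
  (∀ t ∈ GClause.extTerms F C, (constOccs t).Nodup)

/- ### Agreement of structures and (reduct-)embeddings -/

/-- The two interpretations agree on all relation symbols and on the function symbols in `F`. -/
def AgreeOn (M : Type) (S1 S2 : L.Structure M) (F : Set (Sym L)) : Prop :=
  (∀ (n : ℕ) (f : L.Functions n), (⟨n, f⟩ : Sym L) ∈ F →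
      ∀ x : Fin n → M, FunM M S1 f x = FunM M S2 f x) ∧
  (∀ (n : ℕ) (r : L.Relations n) (x : Fin n → M), RelM M S1 r x ↔ RelM M S2 r x)

/-- An embedding of the reducts to the subsignature consisting of all predicate symbols and
the function symbols in `F`: an injective map preserving and reflecting all predicates and
preserving the functions in `F`. -/
structure SubEmb (L : FirstOrder.Language.{0, 0}) (F : Set (Sym L)) (M N : Type)
    (SM : L.Structure M) (SN : L.Structure N) : Type where
  toFun : M → N
  inj : Function.Injective toFun
  map_fun : ∀ (n : ℕ) (f : L.Functions n), (⟨n, f⟩ : Sym L) ∈ F →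
      ∀ x : Fin n → M, toFun (FunM M SM f x) = FunM N SN f (toFun ∘ x)
  map_rel : ∀ (n : ℕ) (r : L.Relations n) (x : Fin n → M),
      RelM M SM r x ↔ RelM N SN r (toFun ∘ x)

/- ### Quantifier elimination and related properties of the base theory -/

/-- `T0` allows quantifier elimination (for formulas over the symbols in `F0`). -/
def HasQE (T0 : L.Theory) (F0 : Set (Sym L)) : Prop :=
  ∀ (m : ℕ) (φ : L.Formula (Fin m)), bfSyms φ ⊆ F0 →
    ∃ ψ : L.Formula (Fin m), ψ.IsQF ∧ bfSyms ψ ⊆ F0 ∧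
      ∀ (M : Type) (S : L.Structure M), Nonempty M → ModelsT M S T0 →
        ∀ v : Fin m → M, (RealizeF M S φ v ↔ RealizeF M S ψ v)

def ModelsLits (M : Type) (S : L.Structure M) (A : List (Lit L Empty)) : Prop :=
  ∀ l ∈ A, Lit.Realize M S (fun e : Empty => e.elim) l

def litListSyms (A : List (Lit L Empty)) : Set (Sym L) := ⋃ l ∈ A, Lit.syms l

/-- Convexity of a theory (with clause axioms `K`). -/
def Convex (T0 : L.Theory) (K : Set (Clause L)) : Prop :=
  ∀ Γ : List (Lit L Empty), (∀ l ∈ Γ, l.Positive) →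
  ∀ (m : ℕ) (s t : Fin (m + 1) → GTerm L),
    (∀ (M : Type) (S : L.Structure M), Nonempty M → ModelsT M S T0 → ModelsK M S K →
        ModelsLits M S Γ → ∃ i, GVal M S (s i) = GVal M S (t i)) →
    ∃ i0, ∀ (M : Type) (S : L.Structure M), Nonempty M → ModelsT M S T0 → ModelsK M S K →
        ModelsLits M S Γ → GVal M S (s i0) = GVal M S (t i0)

/-- Stable infiniteness. -/
def StablyInfinite (T0 : L.Theory) (K : Set (Clause L)) : Prop :=
  ∀ φ : L.Sentence, φ.IsQF →
    (∃ (M : Type) (_ : Nonempty M) (S : L.Structure M),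
        ModelsT M S T0 ∧ ModelsK M S K ∧ RealizeSent M S φ) →
    ∃ (M : Type) (_ : Infinite M) (S : L.Structure M),
        ModelsT M S T0 ∧ ModelsK M S K ∧ RealizeSent M S φ

/-- Equality interpolation (for a convex theory with interpreted symbols `F0`). -/
def EqInterpolating (T0 : L.Theory) (F0 : Set (Sym L)) : Prop :=
  ∀ (A B : List (Lit L Empty)) (a b : L.Functions 0),
    (⟨0, a⟩ : Sym L) ∉ litListSyms B → (⟨0, b⟩ : Sym L) ∉ litListSyms A →
    (∀ (M : Type) (S : L.Structure M), Nonempty M → ModelsT M S T0 → ModelsLits M S A →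
        ModelsLits M S B → GVal M S (constT a) = GVal M S (constT b)) →
    ∃ t : GTerm L, termSyms t ⊆ F0 ∪ (litListSyms A ∩ litListSyms B) ∧
      ∀ (M : Type) (S : L.Structure M), Nonempty M → ModelsT M S T0 → ModelsLits M S A →
        ModelsLits M S B →
          GVal M S (constT a) = GVal M S t ∧ GVal M S t = GVal M S (constT b)

/-- A universal sentence. -/
def IsUniversalSent (s : L.Sentence) : Prop :=
  ∃ (m : ℕ) (ψ : L.BoundedFormula Empty m), ψ.IsQF ∧ s = ψ.alls

def IsUniversalTheory (T : L.Theory) : Prop := ∀ s ∈ T, IsUniversalSent s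

/-- Close the outermost `k` bound variables existentially. -/
def exsTo {m : ℕ} : ∀ {k : ℕ}, L.BoundedFormula Empty (m + k) → L.BoundedFormula Empty m
  | 0, φ => φ
  | _ + 1, φ => exsTo φ.ex

/-- A `∀∃`-sentence. -/
def IsAESent (s : L.Sentence) : Prop :=
  ∃ (m k : ℕ) (ψ : L.BoundedFormula Empty (m + k)), ψ.IsQF ∧ s = (exsTo ψ).alls

def IsAETheory (T : L.Theory) : Prop := ∀ s ∈ T, IsAESent s

/- ### General uniform interpolants and uniform interpolants (covers) -/

/-- `ψ` is a general uniform interpolant of the ground clause set `G` w.r.t. the theory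
`T0 ∪ K` and the symbols in `Keep` (which contains all interpreted symbols, the shared
uninterpreted symbols and the shared constants). -/
def IsGUIg (T0 : L.Theory) (K : Set (Clause L)) (G : Set (GClause L))
    (Keep : Set (Sym L)) (ψ : L.Sentence) : Prop :=
  ψ.IsQF ∧ sentSyms ψ ⊆ Keep ∧ EntailsC T0 K G ψ ∧
  ∀ θ : L.Sentence, θ.IsQF → sentSyms θ ∩ GSyms G ⊆ Keep →
    EntailsC T0 K G θ → EntailsS T0 K ψ θ

/-- `ψ` is a general uniform interpolant of the ground formula `φ` w.r.t. the theory
`T0 ∪ K` and the symbols in `Keep`. -/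
def IsGUIs (T0 : L.Theory) (K : Set (Clause L)) (φ : L.Sentence)
    (Keep : Set (Sym L)) (ψ : L.Sentence) : Prop :=
  ψ.IsQF ∧ sentSyms ψ ⊆ Keep ∧ EntailsS T0 K φ ψ ∧
  ∀ θ : L.Sentence, θ.IsQF → sentSyms θ ∩ sentSyms φ ⊆ Keep →
    EntailsS T0 K φ θ → EntailsS T0 K ψ θ

/-- `ψ` is a uniform interpolant (cover) of `Γ` w.r.t. the theory `T0 ∪ K`, the set `CC`
of (eliminable) constants and the kept constants `Cs ⊆ CC`; all other symbols are treated
as interpreted. -/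
def IsUI (T0 : L.Theory) (K : Set (Clause L)) (CC Cs : Set (Sym L)) (Γ ψ : L.Sentence) : Prop :=
  ψ.IsQF ∧ sentSyms ψ ∩ CC ⊆ Cs ∧ EntailsS T0 K Γ ψ ∧
  ∀ θ : L.Sentence, θ.IsQF → sentSyms θ ∩ sentSyms Γ ∩ CC ⊆ Cs →
    EntailsS T0 K Γ θ → EntailsS T0 K ψ θ

/- ### The semantic specification of Algorithm 1 -/

/-- The constants occurring in some term of `S` as an argument of a function symbol in `Sigs`. -/
def argConstsOf (Sigs : Set (Sym L)) (S : Set (GTerm L)) : Set (Sym L) :=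
  { p | ∃ c : L.Functions 0, p = ⟨0, c⟩ ∧
      ∃ t ∈ S, ∃ (n : ℕ) (f : L.Functions n) (ts : Fin n → GTerm L),
        t = Term.func f ts ∧ (⟨n, f⟩ : Sym L) ∈ Sigs ∧ ∃ i, ts i = constT c }

/-- Semantic specification of the output `Γ` of Algorithm 1, applied to the theory extension
`T0 ∪ K` (extension symbols `F`), the ground clauses `G` and the instantiation terms `Tt`,
keeping exactly the symbols in `Keep` (all interpreted symbols, the parameters `Sigs` and the
non-eliminated constants):  `Γ` is a ground formula over `Keep` which, on each model of `T0`,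
expresses the existence of values for the eliminated constants and for the purified names of
the extension terms (equivalently, of a reinterpretation of the eliminated symbols) satisfying
`K[Tt] ∪ G`. -/
def AlgOneOutput (F : Set (Sym L)) (T0 : L.Theory) (K : Set (Clause L)) (G : Set (GClause L))
    (Tt : Set (GTerm L)) (Keep : Set (Sym L)) (Γ : L.Sentence) : Prop :=
  Γ.IsQF ∧ sentSyms Γ ⊆ Keep ∧
  ∀ (M : Type) (S : L.Structure M), Nonempty M → ModelsT M S T0 →
    (RealizeSent M S Γ ↔
      ∃ S' : L.Structure M, AgreeOn M S S' Keep ∧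
        ModelsG M S' (instancesIn F K Tt) ∧ ModelsG M S' G)

/- ### Implicit definability -/

/-- `f` is implicitly definable w.r.t. `T0 ∪ K` over the symbols in `Pi1`:
any two interpretations (on the same universe) which agree on `Pi1` and are both models
of `T0 ∪ K` interpret `f` in the same way.  (This is the standard semantic rendering of
the definition via renaming the symbols outside `Pi1` to primed copies.) -/
def ImplicitlyDefinable (T0 : L.Theory) (K : Set (Clause L)) (Pi1 : Set (Sym L))
    {n : ℕ} (f : L.Functions n) : Prop :=
  ∀ (M : Type), Nonempty M → ∀ S1 S2 : L.Structure M,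
    AgreeOn M S1 S2 Pi1 →
    ModelsT M S1 T0 → ModelsK M S1 K → ModelsT M S2 T0 → ModelsK M S2 K →
    ∀ x : Fin n → M, FunM M S1 f x = FunM M S2 f x

end PaperSE

/-!
`Γ` entails, modulo `T`, every ground consequence `θ` of `G` over the kept symbols. By locality,
refuting `Γ ∧ ¬θ` modulo `T` needs only finitely many ground instances of `K₁ ∪ Kᵢ`, with extension
terms taken from the axioms and from `Γ ∧ ¬θ`; moving them into the premises gives a
quantifier-free `θ'` with `Γ ⊨_{T0 ∪ Ks} θ'` and `θ' ⊨_T θ`. Since no symbol of `Σ₁ ∪ Σᵢ` occurs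
in `Γ`, the constants of these instances come from the axioms or from `θ`, and a constant shared
by `θ` and `Γ` lies in `Cs` (the other constants of `Γ` occur in `G`). So the cover property of
`ψ` applies to `θ'`: `ψ ⊨_{T0 ∪ Ks} θ'`, hence `ψ ⊨_T θ`.
-/

namespace PaperSE

variable {L : FirstOrder.Language.{0, 0}}

section Terms

variable {α β : Type}

lemma mem_subterms_self (t : L.Term α) : t ∈ subterms t := by
  cases t <;> simp [subterms]

lemma subterms_finite (t : L.Term α) : (subterms t).Finite := by
  induction t with
  | var a => simp [subterms]
  | func f ts ih => exact (Set.finite_iUnion ih).insert _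

lemma termSyms_subset_of_mem_subterms {t u : L.Term α} (h : u ∈ subterms t) :
    termSyms u ⊆ termSyms t := by
  induction t with
  | var a =>
      obtain rfl : u = Term.var a := h
      rfl
  | func f ts ih =>
      rcases h with rfl | h
      · rfl
      · obtain ⟨i, hi⟩ := Set.mem_iUnion.1 h
        exact (ih i hi).trans <| (Set.subset_iUnion (fun j => termSyms (ts j)) i).trans <|
          Set.subset_insert _ _

lemma termSyms_relabel (g : α → β) (t : L.Term α) :
    termSyms (t.relabel g) = termSyms t := by
  induction t with
  | var a => rfl
  | func f ts ih => simp only [Term.relabel, termSyms, ih]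

lemma Term.relabel_injective {g : α → β} (hg : Function.Injective g) :
    Function.Injective (Term.relabel (L := L) g) := by
  intro t
  induction t with
  | var a =>
      rintro (b | ⟨f, ts⟩) h
      · exact congrArg _ (hg (Term.var.inj h))
      · cases h
  | func f ts ih =>
      rintro (b | ⟨f', ts'⟩) h
      · cases h
      · simp only [Term.relabel, Term.func.injEq] at h
        obtain ⟨rfl, h₁, h₂⟩ := h
        obtain rfl := eq_of_heq h₁
        obtain rfl : ts = ts' := funext fun i => ih i (congrFun (eq_of_heq h₂) i)
        rfl

lemma mem_varOccs_func {n : ℕ} {f : L.Functions n} {ts : Fin n → L.Term α} {x : α} :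
    x ∈ varOccs (Term.func f ts) ↔ ∃ i, x ∈ varOccs (ts i) := by
  simp [varOccs]

lemma subst_mem_subterms_subst {σ : α → L.Term β} {s u : L.Term α} (h : u ∈ subterms s) :
    u.subst σ ∈ subterms (s.subst σ) := by
  induction s with
  | var a =>
      obtain rfl : u = Term.var a := h
      exact mem_subterms_self _
  | func f ts ih =>
      rcases h with rfl | h
      · exact mem_subterms_self _
      · obtain ⟨i, hi⟩ := Set.mem_iUnion.1 h
        exact Or.inr (Set.mem_iUnion.2 ⟨i, ih i hi⟩)

lemma mem_subterms_subst_of_mem_varOccs {σ : α → L.Term β} {t : L.Term α} {x : α}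
    (hx : x ∈ varOccs t) : σ x ∈ subterms (t.subst σ) := by
  induction t with
  | var a =>
      obtain rfl : x = a := by simpa [varOccs] using hx
      exact mem_subterms_self _
  | func f ts ih =>
      obtain ⟨i, hi⟩ := mem_varOccs_func.1 hx
      exact Or.inr (Set.mem_iUnion.2 ⟨i, ih i hi⟩)

lemma termSyms_subst_subset (σ : α → L.Term β) (t : L.Term α) :
    termSyms (t.subst σ) ⊆ termSyms t ∪ ⋃ x ∈ varOccs t, termSyms (σ x) := by
  induction t with
  | var a => simp [varOccs, termSyms]
  | func f ts ih =>
      rintro p (rfl | hp)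
      · exact Or.inl (Set.mem_insert _ _)
      · obtain ⟨i, hi⟩ := Set.mem_iUnion.1 hp
        rcases ih i hi with h | h
        · exact Or.inl (Set.mem_insert_of_mem _ (Set.mem_iUnion.2 ⟨i, h⟩))
        · obtain ⟨x, hx, hpx⟩ := Set.mem_iUnion₂.1 h
          exact Or.inr (Set.mem_iUnion₂.2 ⟨x, mem_varOccs_func.2 ⟨i, hx⟩, hpx⟩)

lemma Term.subst_congr {σ σ' : α → L.Term β} {t : L.Term α}
    (h : ∀ x ∈ varOccs t, σ x = σ' x) : t.subst σ = t.subst σ' := by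
  induction t with
  | var a => exact h a (by simp [varOccs])
  | func f ts ih =>
      simp only [Term.subst]
      exact congrArg _ (funext fun i => ih i fun x hx => h x (mem_varOccs_func.2 ⟨i, hx⟩))

lemma rootIn_subst {F : Set (Sym L)} {t : L.Term α} (σ : α → L.Term β)
    (h : rootIn F t) : rootIn F (t.subst σ) := by
  cases t with
  | var a => exact h.elim
  | func f ts => exact h

end Terms

section Instances

namespace Lit

variable {α β : Type}

lemma terms_finite (l : Lit L α) : l.terms.Finite := by
  cases l with
  | eq t u | neq t u => exact (Set.finite_singleton u).insert t
  | rel R ts | nrel R ts => exact Set.finite_range ts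

lemma terms_subst (σ : α → L.Term β) (l : Lit L α) :
    (l.subst σ).terms = (Term.subst · σ) '' l.terms := by
  cases l with
  | eq t u | neq t u => simp [subst, terms, Set.image_pair]
  | rel R ts | nrel R ts => simp only [subst, terms, ← Set.range_comp]; rfl

lemma subst_congr {σ σ' : α → L.Term β} {l : Lit L α}
    (h : ∀ s ∈ l.terms, ∀ x ∈ varOccs s, σ x = σ' x) : l.subst σ = l.subst σ' := by
  cases l with
  | eq t u | neq t u =>
      simp only [subst, Term.subst_congr (h t (by simp [terms])),
        Term.subst_congr (h u (by simp [terms]))]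
  | rel R ts | nrel R ts =>
      simp only [subst, fun i => Term.subst_congr (h (ts i) ⟨i, rfl⟩)]

lemma realize_subst (M : Type) (S : L.Structure M) (σ : α → GTerm L) (l : Lit L α) :
    (l.subst σ).Realize M S Empty.elim ↔ l.Realize M S (fun x => GVal M S (σ x)) := by
  have hval (t : L.Term α) : TVal M S Empty.elim (t.subst σ) = TVal M S (GVal M S ∘ σ) t := by
    let _ := S
    exact Term.realize_subst (t := t) (tf := σ) (v := Empty.elim)
  cases l <;> simp only [subst, Realize, hval] <;> rfl

end Lit

namespace Clause

def Occurs (C : Clause L) (x : Fin C.nvars) : Prop :=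
  ∃ l ∈ C.lits, ∃ s ∈ l.terms, x ∈ varOccs s

lemma instantiate_congr {C : Clause L} {σ σ' : Fin C.nvars → GTerm L}
    (h : ∀ x, C.Occurs x → σ x = σ' x) : C.instantiate σ = C.instantiate σ' :=
  List.map_congr_left fun l hl => Lit.subst_congr fun s hs x hx => h x ⟨l, hl, s, hs, hx⟩

lemma subst_mem_gterms_instantiate {C : Clause L} (σ : Fin C.nvars → GTerm L)
    {l : Lit L (Fin C.nvars)} (hl : l ∈ C.lits) {s u : L.Term (Fin C.nvars)}
    (hs : s ∈ l.terms) (hu : u ∈ subterms s) : u.subst σ ∈ (C.instantiate σ).gterms :=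
  Set.mem_iUnion₂.2 ⟨_, List.mem_map_of_mem hl, Set.mem_iUnion₂.2
    ⟨_, (Lit.terms_subst σ l).symm ▸ Set.mem_image_of_mem _ hs, subst_mem_subterms_subst hu⟩⟩

lemma syms_instantiate {C : Clause L} {σ : Fin C.nvars → GTerm L} {p : Sym L}
    (hp : p ∈ GClause.syms (C.instantiate σ)) :
    p ∈ C.syms ∨ ∃ x, C.Occurs x ∧ p ∈ termSyms (σ x) := by
  obtain ⟨_, hl', hp⟩ := Set.mem_iUnion₂.1 hp
  obtain ⟨l, hl, rfl⟩ := List.mem_map.1 hl'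
  obtain ⟨_, hs', hp⟩ := Set.mem_iUnion₂.1 hp
  rw [Lit.terms_subst] at hs'
  obtain ⟨s, hs, rfl⟩ := hs'
  rcases termSyms_subst_subset σ s hp with h | h
  · exact Or.inl (Set.mem_iUnion₂.2 ⟨l, hl, Set.mem_iUnion₂.2 ⟨s, hs, h⟩⟩)
  · obtain ⟨x, hx, hpx⟩ := Set.mem_iUnion₂.1 h
    exact Or.inr ⟨x, ⟨l, hl, s, hs, hx⟩, hpx⟩

lemma exists_root_mem_syms_of_mem_extTerms {F : Set (Sym L)} {C : Clause L}
    {u : L.Term (Fin C.nvars)} (hu : u ∈ C.extTerms F) (σ : Fin C.nvars → GTerm L) :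
    ∃ f ∈ C.syms ∩ F, f ∈ termSyms (u.subst σ) := by
  obtain ⟨hroot, l, hl, s, hs, hus⟩ := hu
  cases u with
  | var a => exact hroot.elim
  | func g ts =>
      exact ⟨⟨_, g⟩, ⟨Set.mem_biUnion hl (Set.mem_biUnion hs
        (termSyms_subset_of_mem_subterms hus (Set.mem_insert _ _))), hroot⟩, Set.mem_insert _ _⟩

lemma exists_extTerm_subst_mem {F : Set (Sym L)} {Tt : Set (GTerm L)} {C : Clause L}
    (hvars : C.VarsBelowExt F) {σ : Fin C.nvars → GTerm L}
    (hσ : ∀ t ∈ GClause.gterms (C.instantiate σ), rootIn F t → t ∈ Tt)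
    {x : Fin C.nvars} (hx : C.Occurs x) :
    ∃ u ∈ C.extTerms F, u.subst σ ∈ Tt ∧ σ x ∈ subterms (u.subst σ) := by
  obtain ⟨u, hu, hxu⟩ := hvars x hx
  obtain ⟨hroot, l, hl, s, hs, hus⟩ := hu
  exact ⟨u, ⟨hroot, l, hl, s, hs, hus⟩,
    hσ _ (subst_mem_gterms_instantiate σ hl hs hus) (rootIn_subst σ hroot),
    mem_subterms_subst_of_mem_varOccs hxu⟩

lemma finite_instantiate_of_occurs_mem (C : Clause L) {V : Set (GTerm L)} (hV : V.Finite) :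
    {D | ∃ σ, D = C.instantiate σ ∧ ∀ x, C.Occurs x → σ x ∈ V}.Finite := by
  rcases isEmpty_or_nonempty (GTerm L) with h | ⟨⟨t₀⟩⟩
  · exact (Set.finite_range C.instantiate).subset (by rintro _ ⟨σ, rfl, -⟩; exact ⟨σ, rfl⟩)
  · refine ((Set.Finite.pi fun _ => hV.insert t₀).image C.instantiate).subset ?_
    rintro _ ⟨σ, rfl, hσ⟩
    classical
    refine ⟨fun x => if C.Occurs x then σ x else t₀, fun x _ => ?_,
      instantiate_congr fun x hx => if_pos hx⟩
    by_cases hx : C.Occurs x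
    · simp [hx, hσ x hx]
    · simp [hx]

end Clause

lemma ClauseHolds.instantiate {M : Type} {S : L.Structure M} {C : Clause L}
    (hC : ClauseHolds M S C) (σ : Fin C.nvars → GTerm L) :
    GClauseHolds M S (C.instantiate σ) := by
  obtain ⟨l, hl, hr⟩ := hC fun i => GVal M S (σ i)
  exact ⟨l.subst σ, List.mem_map_of_mem hl, (Lit.realize_subst M S σ l).2 hr⟩

lemma termSyms_subset_syms_of_mem_gterms {C : GClause L} {t : GTerm L}
    (h : t ∈ GClause.gterms C) : termSyms t ⊆ GClause.syms C := by
  obtain ⟨l, hl, h⟩ := Set.mem_iUnion₂.1 h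
  obtain ⟨s, hs, hts⟩ := Set.mem_iUnion₂.1 h
  exact fun p hp => Set.mem_iUnion₂.2 ⟨l, hl, Set.mem_iUnion₂.2
    ⟨s, hs, termSyms_subset_of_mem_subterms hts hp⟩⟩

lemma gterms_finite (C : GClause L) : (GClause.gterms C).Finite :=
  C.finite_toSet.biUnion fun l _ => l.terms_finite.biUnion fun t _ => subterms_finite t

variable {F : Set (Sym L)} {K : Set (Clause L)} {G : Set (GClause L)}

lemma estKG_finite (hK : K.Finite) (hG : G.Finite) : (estKG F K G).Finite := by
  have hcast (C : Clause L) : (GTerm.cast (α := Fin C.nvars) ⁻¹'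
      ⋃ l ∈ C.lits, ⋃ s ∈ l.terms, subterms s).Finite :=
    (C.lits.finite_toSet.biUnion fun l _ => l.terms_finite.biUnion fun s _ =>
      subterms_finite s).preimage (Term.relabel_injective (fun e => e.elim)).injOn
  refine ((hK.biUnion fun C _ => hcast C).union (hG.biUnion fun C _ => gterms_finite C)).subset ?_
  rintro t ⟨-, ⟨C, hC, l, hl, s, hs, ht⟩ | ⟨C, hC, ht⟩⟩
  · exact Or.inl (Set.mem_biUnion hC (Set.mem_biUnion hl (Set.mem_biUnion hs ht)))
  · exact Or.inr (Set.mem_biUnion hC ht)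

lemma termSyms_of_mem_estKG {t : GTerm L} (ht : t ∈ estKG F K G) :
    termSyms t ⊆ ClausesSyms K ∨ ∃ C ∈ G, termSyms t ⊆ GClause.syms C := by
  rcases ht with ⟨-, ⟨C, hC, l, hl, s, hs, hts⟩ | ⟨C, hC, ht⟩⟩
  · refine Or.inl fun p hp => Set.mem_biUnion hC (Set.mem_biUnion hl (Set.mem_biUnion hs ?_))
    exact termSyms_subset_of_mem_subterms hts (by rwa [GTerm.cast, termSyms_relabel])
  · exact Or.inr ⟨C, hC, termSyms_subset_syms_of_mem_gterms ht⟩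

lemma instancesIn_finite {Tt : Set (GTerm L)} (hK : K.Finite) (hTt : Tt.Finite)
    (hvars : ∀ C ∈ K, C.VarsBelowExt F) : (instancesIn F K Tt).Finite := by
  have hV : (⋃ t ∈ Tt, subterms t).Finite := hTt.biUnion fun t _ => subterms_finite t
  refine (hK.biUnion fun C _ => C.finite_instantiate_of_occurs_mem hV).subset ?_
  rintro _ ⟨C, hC, σ, rfl, hσ⟩
  refine Set.mem_biUnion hC ⟨σ, rfl, fun x hx => ?_⟩
  obtain ⟨u, -, hu, hxu⟩ := Clause.exists_extTerm_subst_mem (hvars C hC) hσ hx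
  exact Set.mem_biUnion hu hxu

lemma ClausesSyms_union (K K' : Set (Clause L)) :
    ClausesSyms (K ∪ K') = ClausesSyms K ∪ ClausesSyms K' :=
  Set.biUnion_union _ _ _

lemma argConstsOf_subset_GSyms (Sigs : Set (Sym L)) (G : Set (GClause L)) :
    argConstsOf Sigs (GTerms G) ⊆ GSyms G := by
  rintro _ ⟨c, rfl, t, ht, n, f, ts, rfl, -, i, hi⟩
  obtain ⟨C, hC, ht⟩ := Set.mem_iUnion₂.1 ht
  refine Set.mem_biUnion hC (termSyms_subset_syms_of_mem_gterms ht ?_)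
  exact Set.mem_insert_of_mem _ (Set.mem_iUnion.2 ⟨i, by simp [hi, constT, termSyms]⟩)

end Instances

section Sentences

variable {α : Type} {n : ℕ}

@[simp]
lemma bfSyms_imp (φ ψ : L.BoundedFormula α n) : bfSyms (φ.imp ψ) = bfSyms φ ∪ bfSyms ψ := rfl

@[simp]
lemma bfSyms_bot : bfSyms (⊥ : L.BoundedFormula α n) = ∅ := rfl

@[simp]
lemma bfSyms_not (φ : L.BoundedFormula α n) : bfSyms φ.not = bfSyms φ := by
  simp [BoundedFormula.not]

@[simp]
lemma bfSyms_sup (φ ψ : L.BoundedFormula α n) : bfSyms (φ ⊔ ψ) = bfSyms φ ∪ bfSyms ψ := by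
  simp [max]

lemma isQF_foldr_imp {l : List (L.BoundedFormula α n)} {φ : L.BoundedFormula α n}
    (hl : ∀ ψ ∈ l, ψ.IsQF) (hφ : φ.IsQF) : (l.foldr BoundedFormula.imp φ).IsQF := by
  induction l with
  | nil => exact hφ
  | cons ψ l ih => simp only [List.forall_mem_cons] at hl; exact hl.1.imp (ih hl.2)

lemma bfSyms_foldr_imp (l : List (L.BoundedFormula α n)) (φ : L.BoundedFormula α n) :
    bfSyms (l.foldr BoundedFormula.imp φ) = (⋃ ψ ∈ l, bfSyms ψ) ∪ bfSyms φ := by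
  induction l with
  | nil => simp
  | cons ψ l ih => simp [ih, Set.union_assoc]

lemma isQF_foldr_sup {l : List (L.BoundedFormula α n)} (hl : ∀ ψ ∈ l, ψ.IsQF) :
    (l.foldr (· ⊔ ·) ⊥).IsQF := by
  induction l with
  | nil => exact BoundedFormula.isQF_bot
  | cons ψ l ih => simp only [List.forall_mem_cons] at hl; exact hl.1.sup (ih hl.2)

lemma bfSyms_foldr_sup (l : List (L.BoundedFormula α n)) :
    bfSyms (l.foldr (· ⊔ ·) ⊥) = ⋃ ψ ∈ l, bfSyms ψ := by
  induction l with
  | nil => simp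
  | cons ψ l ih => simp [ih]

lemma realizeSent_iff (M : Type) (S : L.Structure M) (φ : L.Sentence) :
    RealizeSent M S φ ↔ @BoundedFormula.Realize L M S _ _ φ Empty.elim default := Iff.rfl

@[simp]
lemma realizeSent_not (M : Type) (S : L.Structure M) (φ : L.Sentence) :
    RealizeSent M S φ.not ↔ ¬ RealizeSent M S φ := Iff.rfl

def Lit.toSentence : Lit L Empty → L.Sentence
  | .eq t u => Term.bdEqual (t.relabel Sum.inl) (u.relabel Sum.inl)
  | .neq t u => (Term.bdEqual (t.relabel Sum.inl) (u.relabel Sum.inl)).not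
  | .rel R ts => R.boundedFormula fun i => (ts i).relabel Sum.inl
  | .nrel R ts => (R.boundedFormula fun i => (ts i).relabel Sum.inl).not

lemma Lit.realizeSent_toSentence (M : Type) (S : L.Structure M) (l : Lit L Empty) :
    RealizeSent M S l.toSentence ↔ l.Realize M S Empty.elim := by
  have hval (t : GTerm L) (xs : Fin 0 → M) :
      @Term.realize L M S _ (Sum.elim Empty.elim xs) (t.relabel Sum.inl) =
        TVal M S Empty.elim t := by
    let _ := S
    rw [Term.realize_relabel, Sum.elim_comp_inl]; rfl
  cases l <;> simp [toSentence, realizeSent_iff, Realize, hval, RelM, Term.bdEqual,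
    Relations.boundedFormula, BoundedFormula.Realize]

lemma Lit.toSentence_isQF (l : Lit L Empty) : l.toSentence.IsQF := by
  cases l with
  | eq t u => exact (BoundedFormula.IsAtomic.equal _ _).isQF
  | neq t u => exact (BoundedFormula.IsAtomic.equal _ _).isQF.not
  | rel R ts => exact (BoundedFormula.IsAtomic.rel _ _).isQF
  | nrel R ts => exact (BoundedFormula.IsAtomic.rel _ _).isQF.not

lemma Lit.sentSyms_toSentence (l : Lit L Empty) : sentSyms l.toSentence = l.syms := by
  cases l <;> simp [toSentence, syms, terms, Term.bdEqual, Relations.boundedFormula, bfSyms,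
    termSyms_relabel]

def GClause.toSentence (C : GClause L) : L.Sentence := (C.map Lit.toSentence).foldr (· ⊔ ·) ⊥

lemma GClause.realizeSent_toSentence (M : Type) (S : L.Structure M) (C : GClause L) :
    RealizeSent M S C.toSentence ↔ GClauseHolds M S C := by
  simp [toSentence, realizeSent_iff, GClauseHolds, ← Lit.realizeSent_toSentence]

lemma GClause.toSentence_isQF (C : GClause L) : C.toSentence.IsQF :=
  isQF_foldr_sup (by simpa using fun l _ => l.toSentence_isQF)

lemma GClause.sentSyms_toSentence (C : GClause L) : sentSyms C.toSentence = C.syms := by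
  simp [toSentence, bfSyms_foldr_sup, syms, Lit.sentSyms_toSentence]

end Sentences

section ClausalForm

lemma exists_lit_toSentence_of_isAtomic {φ : L.Sentence} (h : φ.IsAtomic) :
    ∃ l l' : Lit L Empty, l.toSentence = φ ∧ l'.toSentence = φ.not := by
  let ρ : Empty ⊕ Fin 0 → Empty := Sum.elim id Fin.elim0
  have hρ (t : L.Term (Empty ⊕ Fin 0)) : (t.relabel ρ).relabel Sum.inl = t := by
    rw [Term.relabel_relabel]
    conv_rhs => rw [← Term.relabel_id t]
    congr 1
    funext x
    rcases x with e | i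
    exacts [e.elim, i.elim0]
  cases h with
  | equal t u =>
      exact ⟨.eq (t.relabel ρ) (u.relabel ρ), .neq (t.relabel ρ) (u.relabel ρ),
        by simp [Lit.toSentence, hρ, Term.bdEqual], by simp [Lit.toSentence, hρ, Term.bdEqual]⟩
  | rel R ts =>
      exact ⟨.rel R fun i => (ts i).relabel ρ, .nrel R fun i => (ts i).relabel ρ,
        by simp [Lit.toSentence, hρ, Relations.boundedFormula],
        by simp [Lit.toSentence, hρ, Relations.boundedFormula]⟩

lemma GClause.syms_append (C D : GClause L) : GClause.syms (C ++ D) = C.syms ∪ D.syms := by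
  ext p
  simp [GClause.syms, or_and_right, exists_or]

lemma forall_gclauseHolds_flatMap_append (M : Type) (S : L.Structure M) (A B : List (GClause L)) :
    (∀ E ∈ A.flatMap fun C => B.map (C ++ ·), GClauseHolds M S E) ↔
      (∀ C ∈ A, GClauseHolds M S C) ∨ ∀ D ∈ B, GClauseHolds M S D := by
  have happend (C D : GClause L) :
      GClauseHolds M S (C ++ D) ↔ GClauseHolds M S C ∨ GClauseHolds M S D := by
    simp [GClauseHolds, or_and_right, exists_or]
  simp only [List.mem_flatMap, List.mem_map]
  constructor
  · intro h
    by_contra! hne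
    obtain ⟨⟨C, hC, hnC⟩, ⟨D, hD, hnD⟩⟩ := hne
    exact ((happend C D).1 (h _ ⟨C, hC, D, hD, rfl⟩)).elim hnC hnD
  · rintro h _ ⟨C, hC, D, hD, rfl⟩
    exact (happend C D).2 (h.imp (· C hC) (· D hD))

lemma exists_clauses_of_isQF {φ : L.Sentence} (hφ : φ.IsQF) :
    ∃ P N : List (GClause L), (∀ C ∈ P ++ N, GClause.syms C ⊆ sentSyms φ) ∧
      ∀ (M : Type) (S : L.Structure M),
        ((∀ C ∈ P, GClauseHolds M S C) ↔ RealizeSent M S φ) ∧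
        ((∀ C ∈ N, GClauseHolds M S C) ↔ ¬ RealizeSent M S φ) := by
  induction hφ with
  | falsum =>
      refine ⟨[ [] ], [], by simp [GClause.syms], fun M S => ?_⟩
      simp [GClauseHolds, realizeSent_iff, BoundedFormula.Realize]
  | of_isAtomic h =>
      obtain ⟨l, l', rfl, hl'⟩ := exists_lit_toSentence_of_isAtomic h
      refine ⟨[ [l] ], [ [l'] ], ?_, fun M S => ?_⟩
      · have := congrArg sentSyms hl'
        simp only [bfSyms_not, Lit.sentSyms_toSentence] at this
        simp [GClause.syms, Lit.sentSyms_toSentence, this]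
      · simp [GClauseHolds, ← Lit.realizeSent_toSentence, hl']
  | imp hf hg ihf ihg =>
      obtain ⟨Pf, Nf, hsf, hf⟩ := ihf
      obtain ⟨Pg, Ng, hsg, hg⟩ := ihg
      refine ⟨Nf.flatMap (fun C => Pg.map (C ++ ·)), Pf ++ Ng, ?_, fun M S => ?_⟩
      · simp only [List.mem_append, List.mem_flatMap, List.mem_map] at hsf hsg ⊢
        rintro _ (⟨C, hC, D, hD, rfl⟩ | hE | hE)
        · rw [GClause.syms_append]
          exact Set.union_subset_union (hsf C (.inr hC)) (hsg D (.inl hD))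
        · exact (hsf _ (.inl hE)).trans Set.subset_union_left
        · exact (hsg _ (.inr hE)).trans Set.subset_union_right
      · rw [forall_gclauseHolds_flatMap_append, (hf M S).2, (hg M S).1]
        simp only [List.mem_append, or_imp, forall_and, (hf M S).1, (hg M S).2,
          realizeSent_iff, BoundedFormula.realize_imp] at *
        tauto

end ClausalForm

section Entailment

variable {T0 : L.Theory} {K K' : Set (Clause L)} {φ ψ θ : L.Sentence}

lemma EntailsC.trans {G : Set (GClause L)} (h₁ : EntailsC T0 K G φ) (h₂ : EntailsS T0 K φ θ) :
    EntailsC T0 K G θ :=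
  fun M S hM hT hK hG => h₂ M S hM hT hK (h₁ M S hM hT hK hG)

lemma EntailsS.trans (h₁ : EntailsS T0 K φ ψ) (h₂ : EntailsS T0 K ψ θ) : EntailsS T0 K φ θ :=
  fun M S hM hT hK hφ => h₂ M S hM hT hK (h₁ M S hM hT hK hφ)

lemma EntailsS.mono (hKK' : K ⊆ K') (h : EntailsS T0 K φ θ) : EntailsS T0 K' φ θ :=
  fun M S hM hT hK => h M S hM hT fun C hC => hK C (hKK' hC)

lemma exists_clauses_iff_and_not {Γ : L.Sentence} (hΓ : Γ.IsQF) (hθ : θ.IsQF) :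
    ∃ G' : Set (GClause L), G'.Finite ∧
      (∀ C ∈ G', GClause.syms C ⊆ sentSyms Γ ∨ GClause.syms C ⊆ sentSyms θ) ∧
      ∀ (M : Type) (S : L.Structure M),
        ModelsG M S G' ↔ RealizeSent M S Γ ∧ ¬ RealizeSent M S θ := by
  obtain ⟨P, _, hPsyms, hP⟩ := exists_clauses_of_isQF hΓ
  obtain ⟨_, N, hNsyms, hN⟩ := exists_clauses_of_isQF hθ
  refine ⟨{C | C ∈ P ++ N}, (P ++ N).finite_toSet, ?_, fun M S => ?_⟩
  · intro C hC
    rcases List.mem_append.1 hC with hC | hC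
    exacts [.inl (hPsyms C (List.mem_append_left _ hC)),
      .inr (hNsyms C (List.mem_append_right _ hC))]
  · simp only [ModelsG, Set.mem_ofPred_eq, List.mem_append, or_imp, forall_and, (hP M S).1,
      (hN M S).2]

lemma realizeSent_foldr_imp (M : Type) (S : L.Structure M) (l : List L.Sentence) :
    RealizeSent M S (l.foldr BoundedFormula.imp θ) ↔
      ((∀ φ ∈ l, RealizeSent M S φ) → RealizeSent M S θ) :=
  Iff.of_eq (@BoundedFormula.realize_foldr_imp L M S _ _ l θ Empty.elim default)

variable {F : Set (Sym L)}

lemma disjoint_syms_of_mem_instancesIn_estKG {Ke : Set (Clause L)} {G' : Set (GClause L)}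
    {Γ : L.Sentence} {X : Set (Sym L)} (hKe : Ke ⊆ K) (hvars : ∀ C ∈ Ke, C.VarsBelowExt F)
    (hG' : ∀ C ∈ G', GClause.syms C ⊆ sentSyms Γ ∨ GClause.syms C ⊆ sentSyms θ)
    (hKX : Disjoint (ClausesSyms K) X) (hθX : Disjoint (sentSyms θ) X)
    (hΓF : Disjoint (ClausesSyms Ke ∩ F) (sentSyms Γ))
    {D : GClause L} (hD : D ∈ instancesIn F Ke (estKG F K G')) : Disjoint (GClause.syms D) X := by
  obtain ⟨C, hC, σ, rfl, hσ⟩ := hD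
  refine Set.disjoint_left.2 fun p hp hpX => ?_
  rcases Clause.syms_instantiate hp with hpC | ⟨x, hx, hpx⟩
  · exact Set.disjoint_left.1 hKX (Set.mem_biUnion (hKe hC) hpC) hpX
  obtain ⟨u, hu, huT, hxu⟩ := Clause.exists_extTerm_subst_mem (hvars C hC) hσ hx
  have hpu : p ∈ termSyms (u.subst σ) := termSyms_subset_of_mem_subterms hxu hpx
  rcases termSyms_of_mem_estKG huT with hK | ⟨E, hE, hsub⟩
  · exact Set.disjoint_left.1 hKX (hK hpu) hpX
  rcases hG' E hE with hEΓ | hEθ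
  · obtain ⟨f, ⟨hfC, hfF⟩, hfu⟩ := Clause.exists_root_mem_syms_of_mem_extTerms hu σ
    exact Set.disjoint_left.1 hΓF ⟨Set.mem_biUnion hC hfC, hfF⟩ (hEΓ (hsub hfu))
  · exact Set.disjoint_left.1 hθX (hEθ (hsub hpu)) hpX

lemma LocalExt.not_modelsG_of_modelsG_instancesIn {Kb Ke : Set (Clause L)}
    {G' : Set (GClause L)} (hloc : LocalExt F T0 (Kb ∪ Ke)) (hG' : G'.Finite)
    (hunsat : ∀ (M : Type) (S : L.Structure M), Nonempty M → ModelsT M S T0 →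
      ModelsK M S (Kb ∪ Ke) → ¬ ModelsG M S G')
    (M : Type) (S : L.Structure M) (hM : Nonempty M) (hT : ModelsT M S T0) (hKb : ModelsK M S Kb)
    (hKe : ModelsG M S (instancesIn F Ke (estKG F (Kb ∪ Ke) G'))) : ¬ ModelsG M S G' := by
  intro hG
  refine (hloc G' hG').1 (fun ⟨M, hM, S, hT, _, hK, hG⟩ => hunsat M S hM hT hK hG)
    ⟨M, hM, S, hT, by simp [ModelsK], ?_⟩
  rintro D (⟨C, hC | hC, σ, rfl, hσ⟩ | hD)
  · exact (hKb C hC).instantiate σ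
  · exact hKe _ ⟨C, hC, σ, rfl, hσ⟩
  · exact hG D hD

theorem exists_entailsS_of_localExt {Kb Ke : Set (Clause L)} {Γ : L.Sentence} {X : Set (Sym L)}
    (hloc : LocalExt F T0 (Kb ∪ Ke)) (hfin : (Kb ∪ Ke).Finite)
    (hvars : ∀ C ∈ Ke, C.VarsBelowExt F) (hΓ : Γ.IsQF) (hθ : θ.IsQF)
    (hent : EntailsS T0 (Kb ∪ Ke) Γ θ) (hKX : Disjoint (ClausesSyms (Kb ∪ Ke)) X)
    (hθX : Disjoint (sentSyms θ) X) (hΓF : Disjoint (ClausesSyms Ke ∩ F) (sentSyms Γ)) :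
    ∃ θ' : L.Sentence, θ'.IsQF ∧ Disjoint (sentSyms θ') X ∧
      EntailsS T0 Kb Γ θ' ∧ EntailsS T0 (Kb ∪ Ke) θ' θ := by
  obtain ⟨G', hG'fin, hG'syms, hG'⟩ := exists_clauses_iff_and_not hΓ hθ
  have hunsat := hloc.not_modelsG_of_modelsG_instancesIn hG'fin fun M S hM hT hK hG =>
    ((hG' M S).1 hG).2 (hent M S hM hT hK ((hG' M S).1 hG).1)
  set N := instancesIn F Ke (estKG F (Kb ∪ Ke) G')
  have hN : N.Finite :=
    instancesIn_finite (hfin.subset Set.subset_union_right) (estKG_finite hfin hG'fin) hvars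
  have hNl (M : Type) (S : L.Structure M) :
      (∀ φ ∈ hN.toFinset.toList.map GClause.toSentence, RealizeSent M S φ) ↔
        ∀ D ∈ N, GClauseHolds M S D := by
    simp [GClause.realizeSent_toSentence]
  refine ⟨(hN.toFinset.toList.map GClause.toSentence).foldr BoundedFormula.imp θ,
    isQF_foldr_imp (by simpa using fun D _ => D.toSentence_isQF) hθ, ?_, ?_, ?_⟩
  · rw [sentSyms, bfSyms_foldr_imp, Set.disjoint_union_left]
    refine ⟨?_, hθX⟩
    simp only [List.mem_map, Finset.mem_toList, Set.Finite.mem_toFinset, Set.iUnion_exists,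
      Set.biUnion_and', Set.iUnion_iUnion_eq_right, Set.disjoint_iUnion_left,
      GClause.sentSyms_toSentence]
    exact fun D hD => disjoint_syms_of_mem_instancesIn_estKG Set.subset_union_right hvars
      hG'syms hKX hθX hΓF hD
  · intro M S hM hT hKb hΓM
    rw [realizeSent_foldr_imp, hNl]
    intro hNM
    by_contra hθM
    exact hunsat M S hM hT hKb hNM ((hG' M S).2 ⟨hΓM, hθM⟩)
  · intro M S hM hT hK hθ'M
    refine (realizeSent_foldr_imp M S _).1 hθ'M ((hNl M S).2 ?_)
    rintro _ ⟨C, hC, σ, rfl, -⟩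
    exact (hK C (Or.inr hC)).instantiate σ

end Entailment

theorem uniform_interpolant_of_gamma_is_general_uniform_interpolant_general
    (L : FirstOrder.Language.{0, 0})
    (F0 Sigs Sig1 Sigi CC : Set (Sym L))
    (hd01 : Disjoint F0 (Sigs ∪ Sig1 ∪ Sigi)) (hd02 : Disjoint F0 CC)
    (hd12 : Disjoint (Sigs ∪ Sig1 ∪ Sigi) CC)
    (hdss1 : Disjoint Sigs Sig1) (hdssi : Disjoint Sigs Sigi)
    (T0 : L.Theory)
    (Ks K1 Ki : Set (Clause L)) (hKfin : (Ks ∪ K1 ∪ Ki).Finite)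
    (hKssyms : ClausesSyms Ks ⊆ F0 ∪ Sigs)
    (hK1syms : ClausesSyms K1 ⊆ F0 ∪ Sig1)
    (hKisyms : ClausesSyms Ki ⊆ F0 ∪ Sigi)
    (hKvars : ∀ C ∈ Ks ∪ K1 ∪ Ki, C.VarsBelowExt (Sigs ∪ Sig1 ∪ Sigi))
    (hloc : LocalExt (Sigs ∪ Sig1 ∪ Sigi) T0 (Ks ∪ K1 ∪ Ki))
    (G : Set (GClause L))
    (Cs : Set (Sym L)) (hCs : Cs ⊆ CC ∩ GSyms G)
    -- `Γ` is the general uniform interpolant of `G` w.r.t. `Sigs ∪ C̄s` obtained by Algorithm 1: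
    (Γ : L.Sentence)
    (hΓgui : IsGUIg T0 (Ks ∪ K1 ∪ Ki) G
               (F0 ∪ Sigs ∪ (Cs ∪ (argConstsOf Sigs (GTerms G) ∩ CC))) Γ)
    -- `ψ` is a ground `Π_s^{Cs}`-formula :
    (ψ : L.Sentence) (hψsyms : sentSyms ψ ⊆ F0 ∪ Sigs ∪ Cs)
    -- ... which is a `(T0 ∪ Ks ∪ UIF_{Sig1 ∪ Sigi})`-uniform interpolant of `Γ` w.r.t. `Cs` :
    (hψui : IsUI T0 Ks CC Cs Γ ψ) :
    IsGUIg T0 (Ks ∪ K1 ∪ Ki) G (F0 ∪ Sigs ∪ Cs) ψ := by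
  obtain ⟨hΓqf, hΓsyms, hΓent, hΓmax⟩ := hΓgui
  obtain ⟨hψqf, -, hψent, hψmax⟩ := hψui
  have hKs : Ks ⊆ Ks ∪ K1 ∪ Ki := Set.subset_union_left.trans Set.subset_union_left
  have hK : Ks ∪ K1 ∪ Ki = Ks ∪ (K1 ∪ Ki) := Set.union_assoc _ _ _
  refine ⟨hψqf, hψsyms, hΓent.trans (hψent.mono hKs), fun θ hθqf hθsyms hθent => ?_⟩
  have hΓθ : EntailsS T0 (Ks ∪ K1 ∪ Ki) Γ θ :=
    hΓmax θ hθqf (hθsyms.trans (Set.union_subset_union_right _ Set.subset_union_left)) hθent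
  have hKX : Disjoint (ClausesSyms (Ks ∪ (K1 ∪ Ki))) ((sentSyms Γ ∩ CC) \ Cs) := by
    grind [ClausesSyms_union]
  have hθX : Disjoint (sentSyms θ) ((sentSyms Γ ∩ CC) \ Cs) := by
    grind [argConstsOf_subset_GSyms]
  have hΓF : Disjoint (ClausesSyms (K1 ∪ Ki) ∩ (Sigs ∪ Sig1 ∪ Sigi)) (sentSyms Γ) := by
    grind [ClausesSyms_union]
  obtain ⟨θ', hθ'qf, hθ'X, hΓθ', hθ'θ⟩ := exists_entailsS_of_localExt (hK ▸ hloc) (hK ▸ hKfin)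
    (fun C hC => hKvars C (hK ▸ Set.mem_union_right _ hC)) hΓqf hθqf (hK ▸ hΓθ) hKX hθX hΓF
  have hθ'Γ : sentSyms θ' ∩ sentSyms Γ ∩ CC ⊆ Cs := fun p ⟨⟨hθ', hΓ⟩, hCC⟩ => by
    by_contra hCs
    exact Set.disjoint_left.1 hθ'X hθ' ⟨⟨hΓ, hCC⟩, hCs⟩
  exact ((hψmax θ' hθ'qf hθ'Γ hΓθ').mono hKs).trans (hK ▸ hθ'θ)

/-- Proposition `prop-leave-ax-forgotten-out`.  Under the hypotheses of
the symbol-elimination theorem (Statement 2), let `Γ` be the `T`-general uniform interpolant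
of `G` w.r.t. `Sigs ∪ C̄s` (with `Cs ⊆ C̄s`) obtained by Algorithm 1.  If `ψ` is a ground
`Π_s^{Cs}`-formula which is a `(T0 ∪ Ks ∪ UIF_{Sig1 ∪ Sigi})`-uniform interpolant of `Γ`
w.r.t. `Cs`, then `ψ` is a `T`-general uniform interpolant of `G` w.r.t. `Sigs ∪ Cs`. -/
theorem uniform_interpolant_of_gamma_is_general_uniform_interpolant
    (L : FirstOrder.Language.{0, 0})
    (F0 Sigs Sig1 Sigi CC : Set (Sym L))
    (hd01 : Disjoint F0 (Sigs ∪ Sig1 ∪ Sigi)) (hd02 : Disjoint F0 CC)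
    (hd12 : Disjoint (Sigs ∪ Sig1 ∪ Sigi) CC)
    (hdss1 : Disjoint Sigs Sig1) (hdssi : Disjoint Sigs Sigi) (hds1i : Disjoint Sig1 Sigi)
    (hcover : F0 ∪ (Sigs ∪ Sig1 ∪ Sigi) ∪ CC = Set.univ)
    (hCC0 : ∀ p ∈ CC, p.1 = 0)
    (T0 : L.Theory) (hT0 : theorySyms T0 ⊆ F0) (hqe : HasQE T0 F0)
    (Ks K1 Ki : Set (Clause L)) (hKfin : (Ks ∪ K1 ∪ Ki).Finite)
    (hKssyms : ClausesSyms Ks ⊆ F0 ∪ Sigs)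
    (hK1syms : ClausesSyms K1 ⊆ F0 ∪ Sig1)
    (hKisyms : ClausesSyms Ki ⊆ F0 ∪ Sigi)
    (hKflat : ∀ C ∈ Ks ∪ K1 ∪ Ki, C.Flat (Sigs ∪ Sig1 ∪ Sigi))
    (hKlin : ∀ C ∈ Ks ∪ K1 ∪ Ki, C.Linear (Sigs ∪ Sig1 ∪ Sigi))
    (hKvars : ∀ C ∈ Ks ∪ K1 ∪ Ki, C.VarsBelowExt (Sigs ∪ Sig1 ∪ Sigi))
    (hloc : LocalExt (Sigs ∪ Sig1 ∪ Sigi) T0 (Ks ∪ K1 ∪ Ki))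
    (G : Set (GClause L)) (hGfin : G.Finite)
    (hGsyms : GSyms G ⊆ F0 ∪ Sigs ∪ Sig1 ∪ CC)
    (hGflat : ∀ C ∈ G, GClause.Flat (Sigs ∪ Sig1 ∪ Sigi) C)
    (hGlin : ∀ C ∈ G, GClause.Linear (Sigs ∪ Sig1 ∪ Sigi) C)
    (Cs : Set (Sym L)) (hCs : Cs ⊆ CC ∩ GSyms G)
    -- `Γ` is the general uniform interpolant of `G` w.r.t. `Sigs ∪ C̄s` obtained by Algorithm 1:
    (Γ : L.Sentence)
    (hΓalg : AlgOneOutput (Sigs ∪ Sig1 ∪ Sigi) T0 (Ks ∪ K1) G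
               (estKG (Sigs ∪ Sig1 ∪ Sigi) (Ks ∪ K1 ∪ Ki) G)
               (F0 ∪ Sigs ∪ (Cs ∪ (argConstsOf Sigs (GTerms G) ∩ CC))) Γ)
    (hΓgui : IsGUIg T0 (Ks ∪ K1 ∪ Ki) G
               (F0 ∪ Sigs ∪ (Cs ∪ (argConstsOf Sigs (GTerms G) ∩ CC))) Γ)
    -- `ψ` is a ground `Π_s^{Cs}`-formula :
    (ψ : L.Sentence) (hψsyms : sentSyms ψ ⊆ F0 ∪ Sigs ∪ Cs)
    -- ... which is a `(T0 ∪ Ks ∪ UIF_{Sig1 ∪ Sigi})`-uniform interpolant of `Γ` w.r.t. `Cs` :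
    (hψui : IsUI T0 Ks CC Cs Γ ψ) :
    IsGUIg T0 (Ks ∪ K1 ∪ Ki) G (F0 ∪ Sigs ∪ Cs) ψ :=
  uniform_interpolant_of_gamma_is_general_uniform_interpolant_general L F0 Sigs Sig1 Sigi CC hd01
    hd02 hd12 hdss1 hdssi T0 Ks K1 Ki hKfin hKssyms hK1syms hKisyms hKvars hloc G Cs hCs Γ hΓgui ψ
    hψsyms hψui

end PaperSE
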